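/- arXiv:1908.04433 — 3 statements merged into one kernel-verified Lean document; each statement's English description precedes it below -/
import Mathlib

section
/- For a convex function ℓ:ℝ→ℝ, the partial derivative of the Moreau envelope M_ℓ(x;λ) with respect to λ equals -(x - prox_ℓ(x;λ))²/(2λ²). -/
/-- The Moreau envelope `M_ℓ(x; λ) = inf_v (1/(2λ)) (x - v)^2 + ℓ v`. -/
noncomputable def moreau (ℓ : ℝ → ℝ) (lam x : ℝ) : ℝ :=
  ⨅ v : ℝ, (1 / (2 * lam)) * (x - v) ^ 2 + ℓ v

/-! In the curvature `s = 1 / (2λ)` the envelope `E(s) = inf_v s (x - v)² + ℓ v` is an infimum of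
affine functions of `s`, and the one through the minimizer `p` at `s₀` gives
`E(s) ≤ E(s₀) + (s - s₀)(x - p)²`. Convexity of `ℓ` gives the `s₀`-objective quadratic growth
around `p`, which yields the matching lower bound up to `O((s - s₀)²)`. Hence `E'(s₀) = (x - p)²`,
and the chain rule through `λ ↦ 1 / (2λ)` gives the derivative in `λ`. -/

open Topology Asymptotics Set

theorem hasDerivAt_of_norm_sub_le_sq {𝕜 F : Type*} [NontriviallyNormedField 𝕜]
    [NormedAddCommGroup F] [NormedSpace 𝕜 F] {f : 𝕜 → F} {f' : F} {x : 𝕜} (C : ℝ)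
    (h : ∀ᶠ y in 𝓝 x, ‖f y - f x - (y - x) • f'‖ ≤ C * ‖y - x‖ ^ 2) :
    HasDerivAt f f' x := by
  rw [hasDerivAt_iff_isLittleO]
  refine (IsBigO.of_bound C ?_).trans_isLittleO (isLittleO_pow_sub_sub x one_lt_two)
  filter_upwards [h] with y hy
  rwa [norm_pow, norm_norm]

noncomputable def quadEnvelope (ℓ : ℝ → ℝ) (x s : ℝ) : ℝ :=
  ⨅ v : ℝ, s * (x - v) ^ 2 + ℓ v

section

variable {ℓ : ℝ → ℝ} {x s p : ℝ}

theorem quadEnvelope_eq_of_isMinOn (hp : IsMinOn (fun v => s * (x - v) ^ 2 + ℓ v) univ p) :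
    quadEnvelope ℓ x s = s * (x - p) ^ 2 + ℓ p :=
  le_antisymm (ciInf_le ⟨_, forall_mem_range.2 (isMinOn_univ_iff.mp hp)⟩ p)
    (le_ciInf (isMinOn_univ_iff.mp hp))

theorem ConvexOn.add_half_sq_le_of_isMinOn (hℓ : ConvexOn ℝ univ ℓ)
    (hp : IsMinOn (fun v => s * (x - v) ^ 2 + ℓ v) univ p) (v : ℝ) :
    s * (x - p) ^ 2 + ℓ p + s / 2 * (v - p) ^ 2 ≤ s * (x - v) ^ 2 + ℓ v := by
  have hmid := isMinOn_univ_iff.mp hp ((v + p) / 2)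
  have hconv := hℓ.2 (mem_univ v) (mem_univ p) (by norm_num : (0 : ℝ) ≤ 1 / 2)
    (by norm_num : (0 : ℝ) ≤ 1 / 2) (by norm_num)
  simp only [smul_eq_mul] at hconv
  rw [show (1 / 2 : ℝ) * v + 1 / 2 * p = (v + p) / 2 by ring] at hconv
  have hsq : (x - (v + p) / 2) ^ 2 = ((x - v) ^ 2 + (x - p) ^ 2) / 2 - (v - p) ^ 2 / 4 := by ring
  rw [hsq] at hmid
  linarith

theorem ConvexOn.add_sub_sq_le_of_isMinOn (hℓ : ConvexOn ℝ univ ℓ) (hs : 0 < s)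
    (hp : IsMinOn (fun v => s * (x - v) ^ 2 + ℓ v) univ p) {t : ℝ} (ht : 3 * s ≤ 4 * t)
    (v : ℝ) :
    s * (x - p) ^ 2 + ℓ p + (t - s) * (x - p) ^ 2 - 4 * (x - p) ^ 2 / s * (t - s) ^ 2 ≤
      t * (x - v) ^ 2 + ℓ v := by
  have hgrowth := hℓ.add_half_sq_le_of_isMinOn hp v
  -- completing the square in `v - p`, using `t - s + s / 2 ≥ s / 4`
  have hsquare : 0 ≤ s / 4 * (v - p) ^ 2 - 2 * (t - s) * (x - p) * (v - p)
      + 4 * (x - p) ^ 2 / s * (t - s) ^ 2 := by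
    have : s / 4 * (v - p) ^ 2 - 2 * (t - s) * (x - p) * (v - p)
        + 4 * (x - p) ^ 2 / s * (t - s) ^ 2 = s / 4 * (v - p - 4 * (t - s) * (x - p) / s) ^ 2 := by
      field_simp; ring
    rw [this]; positivity
  have hcoef : 0 ≤ (t - s + s / 4) * (v - p) ^ 2 := mul_nonneg (by linarith) (sq_nonneg _)
  calc s * (x - p) ^ 2 + ℓ p + (t - s) * (x - p) ^ 2 - 4 * (x - p) ^ 2 / s * (t - s) ^ 2
      ≤ s * (x - p) ^ 2 + ℓ p + s / 2 * (v - p) ^ 2 + (t - s) * (x - v) ^ 2 := by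
        linear_combination hsquare + hcoef
    _ ≤ s * (x - v) ^ 2 + ℓ v + (t - s) * (x - v) ^ 2 := by linarith
    _ = t * (x - v) ^ 2 + ℓ v := by ring

theorem hasDerivAt_quadEnvelope (hℓ : ConvexOn ℝ univ ℓ) (hs : 0 < s)
    (hp : IsMinOn (fun v => s * (x - v) ^ 2 + ℓ v) univ p) :
    HasDerivAt (quadEnvelope ℓ x) ((x - p) ^ 2) s := by
  refine hasDerivAt_of_norm_sub_le_sq (4 * (x - p) ^ 2 / s) ?_
  filter_upwards [Ioi_mem_nhds (by linarith : 3 / 4 * s < s)] with t ht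
  have hpointwise := hℓ.add_sub_sq_le_of_isMinOn hs hp (t := t) (by linarith [mem_Ioi.mp ht])
  have hupper : quadEnvelope ℓ x t ≤ t * (x - p) ^ 2 + ℓ p :=
    ciInf_le ⟨_, forall_mem_range.2 hpointwise⟩ p
  have hlower : _ ≤ quadEnvelope ℓ x t := le_ciInf hpointwise
  have hC : 0 ≤ 4 * (x - p) ^ 2 / s * (t - s) ^ 2 := by positivity
  rw [Real.norm_eq_abs, Real.norm_eq_abs, sq_abs, abs_le, quadEnvelope_eq_of_isMinOn hp,
    smul_eq_mul]
  constructor <;> linarith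

end

/-- For a convex function ℓ : ℝ → ℝ, the partial derivative of the
Moreau envelope `M_ℓ(x; λ)` with respect to `λ` equals
`-(x - prox_ℓ(x; λ))^2 / (2 λ^2)`, where `prox_ℓ(x; λ)` is the minimizer of
`v ↦ (1/(2λ))(x - v)^2 + ℓ v`. -/
theorem moreau_hasDerivAt_lam
    (ℓ : ℝ → ℝ) (hℓ : ConvexOn ℝ Set.univ ℓ)
    (lam : ℝ) (hlam : 0 < lam) (x : ℝ)
    (prox : ℝ)
    (hprox : IsMinOn (fun v : ℝ => (1 / (2 * lam)) * (x - v) ^ 2 + ℓ v)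
      Set.univ prox) :
    HasDerivAt (fun l : ℝ => moreau ℓ l x)
      (-(x - prox) ^ 2 / (2 * lam ^ 2)) lam := by
  have hcurv : HasDerivAt (fun l : ℝ => 1 / (2 * l)) (-1 / (2 * lam ^ 2)) lam :=
    ((hasDerivAt_const lam (1 : ℝ)).div ((hasDerivAt_id' lam).const_mul 2)
      (by positivity)).congr_deriv (by field_simp; ring)
  refine ((hasDerivAt_quadEnvelope hℓ (by positivity) hprox).comp lam hcurv).congr_deriv ?_
  ring
end

section
/- If ℓ:ℝ→ℝ is convex and differentiable, then the x-derivative of the Moreau envelope satisfies ∂M_ℓ(x;λ)/∂x = ℓ'(prox_ℓ(x;λ)), and the λ-derivative satisfies ∂M_ℓ(x;λ)/∂λ = -(1/2)(ℓ'(prox_ℓ(x;λ)))². -/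
open Filter Topology Set

theorem iInf_eq_of_isMinOn_univ {α : Type*} {f : α → ℝ} {a : α} (h : IsMinOn f univ a) :
    ⨅ w, f w = f a :=
  have : Nonempty α := ⟨a⟩
  ciInf_eq_of_forall_ge_of_forall_gt_exists_lt (fun w => h (mem_univ w)) fun _ hw => ⟨a, hw⟩

theorem hasDerivAt_of_mul_le_sub_le_mul {f a b : ℝ → ℝ} {c t₀ : ℝ}
    (ha : Tendsto a (𝓝 t₀) (𝓝 c)) (hb : Tendsto b (𝓝 t₀) (𝓝 c))
    (hlo : ∀ᶠ t in 𝓝 t₀, (t - t₀) * a t ≤ f t - f t₀)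
    (hhi : ∀ᶠ t in 𝓝 t₀, f t - f t₀ ≤ (t - t₀) * b t) :
    HasDerivAt f c t₀ := by
  rw [hasDerivAt_iff_tendsto_slope]
  have hmin : Tendsto (fun t => min (a t) (b t)) (𝓝[≠] t₀) (𝓝 c) := by
    simpa using (ha.min hb).mono_left nhdsWithin_le_nhds
  have hmax : Tendsto (fun t => max (a t) (b t)) (𝓝[≠] t₀) (𝓝 c) := by
    simpa using (ha.max hb).mono_left nhdsWithin_le_nhds
  have hslope : ∀ᶠ t in 𝓝[≠] t₀,
      min (a t) (b t) ≤ slope f t₀ t ∧ slope f t₀ t ≤ max (a t) (b t) := by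
    filter_upwards [self_mem_nhdsWithin, nhdsWithin_le_nhds hlo, nhdsWithin_le_nhds hhi]
      with t (ht : t ≠ t₀) hlot hhit
    rw [slope_def_field]
    rcases ht.lt_or_gt with h | h
    · have h' : t - t₀ < 0 := sub_neg.mpr h
      exact ⟨min_le_of_right_le ((le_div_iff_of_neg h').mpr (by linarith)),
        le_max_of_le_left ((div_le_iff_of_neg h').mpr (by linarith))⟩
    · have h' : 0 < t - t₀ := sub_pos.mpr h
      exact ⟨min_le_of_left_le ((le_div_iff₀ h').mpr (by linarith)),
        le_max_of_le_right ((div_le_iff₀ h').mpr (by linarith))⟩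
  exact tendsto_of_tendsto_of_tendsto_of_le_of_le' hmin hmax
    (hslope.mono fun _ h => h.1) (hslope.mono fun _ h => h.2)

theorem hasDerivAt_iInf_of_isMinOn {α : Type*} [TopologicalSpace α] {g D : ℝ → α → ℝ}
    {v : ℝ → α} {t₀ : ℝ}
    (hmin : ∀ᶠ t in 𝓝 t₀, IsMinOn (g t) univ (v t))
    (hg : ∀ᶠ t in 𝓝 t₀, ∀ w, g t w - g t₀ w = (t - t₀) * D t w)
    (hv : ContinuousAt v t₀) (hD : ContinuousAt (Function.uncurry D) (t₀, v t₀)) :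
    HasDerivAt (fun t => ⨅ w, g t w) (D t₀ (v t₀)) t₀ := by
  have hM : ∀ᶠ t in 𝓝 t₀, ⨅ w, g t w = g t (v t) :=
    hmin.mono fun _ h => iInf_eq_of_isMinOn_univ h
  have hmin₀ := hmin.self_of_nhds
  refine hasDerivAt_of_mul_le_sub_le_mul (a := fun t => D t (v t)) (b := fun t => D t (v t₀))
    (hD.comp (f := fun t => (t, v t)) (continuousAt_id.prodMk hv)).tendsto
    (hD.comp (f := fun t => (t, v t₀)) (continuousAt_id.prodMk continuousAt_const)).tendsto
    ?_ ?_
  · filter_upwards [hM, hg] with t hMt hgt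
    rw [hMt, hM.self_of_nhds, ← hgt]
    linarith [isMinOn_iff.mp hmin₀ (v t) (mem_univ _)]
  · filter_upwards [hM, hmin, hg] with t hMt hmint hgt
    rw [hMt, hM.self_of_nhds, ← hgt]
    linarith [isMinOn_iff.mp hmint (v t₀) (mem_univ _)]

theorem Monotone.abs_sub_le_of_eq_add_mul {f : ℝ → ℝ} (hf : Monotone f) {x y p q a b : ℝ}
    (hb : 0 ≤ b) (hp : x = p + a * f p) (hq : y = q + b * f q) :
    |q - p| ≤ |y - x - (b - a) * f p| := by
  have hmono : 0 ≤ (f q - f p) * (q - p) := by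
    rcases le_total p q with h | h
    · exact mul_nonneg (sub_nonneg.2 (hf h)) (sub_nonneg.2 h)
    · exact mul_nonneg_of_nonpos_of_nonpos (sub_nonpos.2 (hf h)) (sub_nonpos.2 h)
  have key : (q - p) ^ 2 + b * ((f q - f p) * (q - p)) = (y - x - (b - a) * f p) * (q - p) := by
    subst hp hq; ring
  have hsq : |q - p| * |q - p| ≤ |y - x - (b - a) * f p| * |q - p| := by
    rw [abs_mul_abs_self, ← abs_mul]
    nlinarith [le_abs_self ((y - x - (b - a) * f p) * (q - p)), mul_nonneg hb hmono]
  rcases (abs_nonneg (q - p)).eq_or_lt with h | h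
  · rw [← h]; exact abs_nonneg _
  · exact le_of_mul_le_mul_right hsq h

theorem ConvexOn.monotone_of_hasDerivAt {f f' : ℝ → ℝ} (hf : ConvexOn ℝ univ f)
    (hd : ∀ t, HasDerivAt f (f' t) t) : Monotone f' := by
  intro a b hab
  simpa only [(hd a).deriv, (hd b).deriv] using
    hf.monotoneOn_deriv (fun t _ => (hd t).differentiableAt) (mem_univ a) (mem_univ b) hab

theorem eq_add_mul_of_isMinOn_of_hasDerivAt {ℓ : ℝ → ℝ} {x lam p c : ℝ} (hlam : lam ≠ 0)
    (hp : IsMinOn (fun v => 1 / (2 * lam) * (x - v) ^ 2 + ℓ v) univ p)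
    (hℓ : HasDerivAt ℓ c p) : x = p + lam * c := by
  have h := (hp.isLocalMin univ_mem).hasDerivAt_eq_zero
    ((((hasDerivAt_id p).const_sub x).pow 2).const_mul (1 / (2 * lam)) |>.add hℓ)
  norm_num at h
  field_simp at h
  linarith

/-- If ℓ : ℝ → ℝ is convex and differentiable with derivative ℓ',
then the x-derivative of the Moreau envelope equals `ℓ'(prox_ℓ(x; λ))` and the
λ-derivative equals `-(1/2) (ℓ'(prox_ℓ(x; λ)))^2`, where `prox_ℓ(x; λ)` is the
unique minimizer of `v ↦ (1/(2λ))(x - v)^2 + ℓ v`. -/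
theorem moreau_deriv_of_differentiable
    (ℓ ℓ' : ℝ → ℝ) (hℓ : ConvexOn ℝ Set.univ ℓ)
    (hdiff : ∀ t : ℝ, HasDerivAt ℓ (ℓ' t) t)
    (x lam : ℝ) (hlam : 0 < lam)
    (prox : ℝ → ℝ → ℝ)
    (hprox : ∀ x' l' : ℝ, 0 < l' →
      IsMinOn (fun v : ℝ => (1 / (2 * l')) * (x' - v) ^ 2 + ℓ v)
        Set.univ (prox x' l')) :
    HasDerivAt (fun x' : ℝ => moreau ℓ lam x') (ℓ' (prox x lam)) x ∧
    HasDerivAt (fun l : ℝ => moreau ℓ l x)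
      (-(1 / 2) * (ℓ' (prox x lam)) ^ 2) lam := by
  have hfoc : ∀ y l, 0 < l → y = prox y l + l * ℓ' (prox y l) := fun y l hl =>
    eq_add_mul_of_isMinOn_of_hasDerivAt hl.ne' (hprox y l hl) (hdiff _)
  have hdist : ∀ y l, 0 < l →
      |prox y l - prox x lam| ≤ |y - x - (l - lam) * ℓ' (prox x lam)| := fun y l hl =>
    (hℓ.monotone_of_hasDerivAt hdiff).abs_sub_le_of_eq_add_mul hl.le (hfoc x lam hlam)
      (hfoc y l hl)
  have hx := hfoc x lam hlam
  constructor
  · have hcont : ContinuousAt (fun y => prox y lam) x :=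
      continuousAt_of_locally_lipschitz one_pos 1 fun y _ => by
        simpa [Real.dist_eq] using hdist y lam hlam
    refine (hasDerivAt_iInf_of_isMinOn (D := fun y w => (y + x - 2 * w) / (2 * lam))
      (.of_forall fun y => hprox y lam hlam) (.of_forall fun y w => by field_simp; ring)
      hcont (by fun_prop)).congr_deriv ?_
    field_simp
    linarith
  · have hcont : ContinuousAt (fun l => prox x l) lam :=
      continuousAt_of_locally_lipschitz hlam |ℓ' (prox x lam)| fun l hl => by
        have hl : 0 < l := by
          rw [Real.dist_eq] at hl
          linarith [neg_abs_le (l - lam)]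
        simpa [Real.dist_eq, abs_mul, mul_comm] using hdist x l hl
    refine (hasDerivAt_iInf_of_isMinOn (D := fun l w => -(x - w) ^ 2 / (2 * l * lam))
      ((eventually_gt_nhds hlam).mono fun l hl => hprox x l hl)
      ((eventually_gt_nhds hlam).mono fun l hl w => by field_simp; ring)
      hcont (by fun_prop (disch := positivity))).congr_deriv ?_
    have hxp : x - prox x lam = lam * ℓ' (prox x lam) := by linarith
    rw [hxp]
    field_simp
end

section
/- Let G,S ~ N(0,1) be independent and Y = BSC_ε(sign(S)) with ε∈[0,1/2]. For the squared loss ℓ(t)=(t-1)², the system of equations E[YS·ℓ'(prox_ℓ(αG+μSY;λ))]=0, λ²δ·E[ℓ'(prox_ℓ(αG+μSY;λ))²]=α², λδ·E[G·ℓ'(prox_ℓ(αG+μSY;λ))]=α has, for δ>1, the solution μ = (1-2ε)√(2/π), λ = 1/(2(δ-1)), and α² = (1 - (2/π)(1-2ε)²)/(δ-1). -/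
open MeasureTheory ProbabilityTheory Real Set
open scoped NNReal ENNReal

/-!
Write `Z = S * Y = B * |S|`. For the squared loss `ℓ'(prox_ℓ(x; λ)) = c (x - 1)` with
`c = 2 / (1 + 2λ)`, so each of the three expectations is a quadratic expression in the
moments `E G = 0`, `E G² = E Z² = 1`, `E[G Z] = 0` and
`E Z = E B · E|S| = (1 - 2ε) √(2/π) = μ`.
The first equation becomes `c μ - c μ = 0`; since `λ δ c = 1`, the third becomes `α = α`,
and the second becomes `α² + 1 - μ² = δ α²`, which is the choice of `α`.
-/

lemma integral_Ioi_mul_exp_neg_mul_sq {b : ℝ} (hb : 0 < b) :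
    ∫ x in Ioi (0 : ℝ), x * exp (-b * x ^ 2) = (2 * b)⁻¹ := by
  have h := integral_mul_cexp_neg_mul_sq (b := (b : ℂ)) (by simpa using hb)
  have hcast (r : ℝ) :
      (r : ℂ) * Complex.exp (-b * r ^ 2) = ((r * exp (-b * r ^ 2) : ℝ) : ℂ) := by
    push_cast; rfl
  simp_rw [hcast] at h
  rw [integral_complex_ofReal] at h
  exact_mod_cast h

lemma integral_abs_gaussianReal (v : ℝ≥0) :
    ∫ x, |x| ∂gaussianReal 0 v = √(2 * v / π) := by
  rcases eq_or_ne v 0 with rfl | hv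
  · simp [gaussianReal_zero_var]
  have hv' : (0 : ℝ) < v := by positivity
  calc ∫ x, |x| ∂gaussianReal 0 v
      = (√(2 * π * v))⁻¹ * ∫ x, |x| * exp (-(2 * v : ℝ)⁻¹ * |x| ^ 2) := by
        rw [integral_gaussianReal_eq_integral_smul hv, ← integral_const_mul]
        congr 1 with x
        simp only [gaussianPDFReal, smul_eq_mul, sub_zero, sq_abs]
        ring_nf
    _ = (√(2 * π * v))⁻¹ * (2 * v) := by
        rw [integral_comp_abs (f := fun x => x * exp (-(2 * v : ℝ)⁻¹ * x ^ 2)),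
          integral_Ioi_mul_exp_neg_mul_sq (by positivity)]
        field_simp
    _ = √(2 * v / π) := by
        rw [← sqrt_sq (by positivity : 0 ≤ (√(2 * π * v))⁻¹ * (2 * v)), mul_pow, inv_pow,
          sq_sqrt (by positivity)]
        congr 1
        field_simp

namespace ProbabilityTheory

variable {Ω : Type*} [MeasurableSpace Ω] {P : Measure Ω} {X : Ω → ℝ} {m : ℝ} {v : ℝ≥0}

lemma HasLaw.integral_gaussianReal (hX : HasLaw X (gaussianReal m v) P) : ∫ ω, X ω ∂P = m :=
  hX.integral_eq.trans integral_id_gaussianReal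

lemma HasLaw.integral_sq_gaussianReal (hX : HasLaw X (gaussianReal m v) P) :
    ∫ ω, X ω ^ 2 ∂P = v + m ^ 2 := by
  have := hX.isProbabilityMeasure
  have h := variance_eq_sub hX.hasGaussianLaw.memLp_two
  rw [hX.variance_eq, variance_id_gaussianReal, hX.integral_gaussianReal] at h
  simp only [Pi.pow_apply] at h
  linarith

lemma HasLaw.integral_abs_gaussianReal (hX : HasLaw X (gaussianReal 0 v) P) :
    ∫ ω, |X ω| ∂P = √(2 * v / π) :=
  (hX.integral_comp (f := abs) continuous_abs.aestronglyMeasurable).trans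
    (_root_.integral_abs_gaussianReal v)

end ProbabilityTheory

lemma Real.mul_sign_self (r : ℝ) : r * Real.sign r = |r| := by
  rcases lt_trichotomy r 0 with h | rfl | h
  · rw [Real.sign_of_neg h, abs_of_neg h, mul_neg_one]
  · simp
  · rw [Real.sign_of_pos h, abs_of_pos h, mul_one]

section

variable {Ω : Type*} [MeasurableSpace Ω] {P : Measure Ω}

lemma integral_of_eq_one_or_neg_one [IsProbabilityMeasure P] {B : Ω → ℝ} (hB : Measurable B)
    (hBval : ∀ ω, B ω = 1 ∨ B ω = -1) :
    ∫ ω, B ω ∂P = 1 - 2 * P.real {ω | B ω = -1} := by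
  have hset : MeasurableSet {ω | B ω = -1} := hB (measurableSet_singleton _)
  have hB' : ∀ ω, B ω = 1 - 2 * {ω | B ω = -1}.indicator 1 ω := fun ω => by
    rcases hBval ω with h | h <;> simp [h, Set.indicator_apply] <;> norm_num
  have hind : Integrable ({ω | B ω = -1}.indicator (1 : Ω → ℝ)) P :=
    (integrable_indicator_iff hset).2 (integrable_const 1).integrableOn
  rw [integral_congr_ae (ae_of_all _ hB'), integral_sub (integrable_const _) (hind.const_mul 2),
    integral_const_mul, integral_indicator_one hset]
  simp

lemma integral_mul_affine {U G Z : Ω → ℝ} (hU : Integrable U P)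
    (hUG : Integrable (fun ω => U ω * G ω) P) (hUZ : Integrable (fun ω => U ω * Z ω) P)
    (a b c : ℝ) :
    ∫ ω, U ω * (a * G ω + b * Z ω + c) ∂P
      = a * ∫ ω, U ω * G ω ∂P + b * ∫ ω, U ω * Z ω ∂P + c * ∫ ω, U ω ∂P := by
  simp_rw [mul_add, mul_left_comm (U _)]
  rw [integral_add (by fun_prop) (by fun_prop), integral_add (by fun_prop) (by fun_prop),
    integral_const_mul, integral_const_mul, integral_mul_const, mul_comm _ c]

lemma integral_affine_moments [IsProbabilityMeasure P] {G Z : Ω → ℝ} (hG : MemLp G 2 P)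
    (hZ : MemLp Z 2 P) (hG1 : ∫ ω, G ω ∂P = 0) (hG2 : ∫ ω, G ω ^ 2 ∂P = 1)
    (hZ2 : ∫ ω, Z ω ^ 2 ∂P = 1) (hGZ : ∫ ω, G ω * Z ω ∂P = 0) (a b c : ℝ) :
    ∫ ω, Z ω * (a * G ω + b * Z ω + c) ∂P = b + c * ∫ ω, Z ω ∂P ∧
    ∫ ω, G ω * (a * G ω + b * Z ω + c) ∂P = a ∧
    ∫ ω, (a * G ω + b * Z ω + c) ^ 2 ∂P
      = a ^ 2 + b ^ 2 + c ^ 2 + 2 * b * c * ∫ ω, Z ω ∂P := by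
  have iG := hG.integrable one_le_two
  have iZ := hZ.integrable one_le_two
  have iGZ : Integrable (fun ω => G ω * Z ω) P := hG.integrable_mul hZ
  have iZG : Integrable (fun ω => Z ω * G ω) P := hZ.integrable_mul hG
  have hcomm (U V : Ω → ℝ) : ∫ ω, U ω * V ω ∂P = ∫ ω, V ω * U ω ∂P :=
    integral_congr_ae (ae_of_all _ fun ω => mul_comm _ _)
  simp_rw [sq] at hG2 hZ2
  have hW : MemLp (fun ω => a * G ω + b * Z ω + c) 2 P :=
    ((hG.const_mul a).add (hZ.const_mul b)).add (memLp_const c)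
  have hZW : ∫ ω, Z ω * (a * G ω + b * Z ω + c) ∂P = b + c * ∫ ω, Z ω ∂P := by
    rw [integral_mul_affine iZ iZG (hZ.integrable_mul hZ), hZ2, hcomm Z G, hGZ]; ring
  have hGW : ∫ ω, G ω * (a * G ω + b * Z ω + c) ∂P = a := by
    rw [integral_mul_affine iG (hG.integrable_mul hG) iGZ, hG2, hGZ, hG1]; ring
  refine ⟨hZW, hGW, ?_⟩
  have hW1 : ∫ ω, (a * G ω + b * Z ω + c) ∂P = b * ∫ ω, Z ω ∂P + c := by
    have h := integral_mul_affine (U := fun _ => (1 : ℝ)) (integrable_const 1)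
      (by simpa using iG) (by simpa using iZ) a b c
    simp only [one_mul, integral_const, smul_eq_mul, mul_one, hG1] at h
    rw [h, probReal_univ]; ring
  simp_rw [sq]
  rw [integral_mul_affine (hW.integrable one_le_two) (hW.integrable_mul hG) (hW.integrable_mul hZ),
    hcomm _ G, hcomm _ Z, hGW, hZW, hW1]
  ring

variable {G S B : Ω → ℝ}

lemma memLp_mul_abs_of_eq_one_or_neg_one {p : ℝ≥0∞} (hS : MemLp S p P) (hB : Measurable B)
    (hBval : ∀ ω, B ω = 1 ∨ B ω = -1) : MemLp (fun ω => B ω * |S ω|) p P :=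
  hS.of_le (hB.aestronglyMeasurable.mul hS.aestronglyMeasurable.norm) <| ae_of_all _ fun ω => by
    rcases hBval ω with h | h <;> simp [h]

lemma integral_sq_mul_abs_of_eq_one_or_neg_one (hBval : ∀ ω, B ω = 1 ∨ B ω = -1) :
    ∫ ω, (B ω * |S ω|) ^ 2 ∂P = ∫ ω, S ω ^ 2 ∂P := by
  congr 1 with ω
  rcases hBval ω with h | h <;> simp [h]

lemma integral_mul_abs_of_indepFun (hB : Measurable B) (hBS : IndepFun B S P)
    (hS : HasLaw S (gaussianReal 0 1) P) :
    ∫ ω, B ω * |S ω| ∂P = (∫ ω, B ω ∂P) * √(2 / π) := by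
  have hBS' : IndepFun B (fun ω => |S ω|) P := hBS.comp measurable_id measurable_abs
  rw [hBS'.integral_fun_mul_eq_mul_integral hB.aestronglyMeasurable
    hS.aemeasurable.abs.aestronglyMeasurable, hS.integral_abs_gaussianReal]
  norm_num

lemma integral_mul_mul_abs_eq_zero (hBGS : IndepFun B (fun ω => (G ω, S ω)) P)
    (hGS : IndepFun G S P) (hB : Measurable B) (hG : Measurable G) (hS : Measurable S)
    (hG0 : ∫ ω, G ω ∂P = 0) :
    ∫ ω, G ω * (B ω * |S ω|) ∂P = 0 := by
  have hB' : IndepFun B (fun ω => G ω * |S ω|) P :=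
    hBGS.comp measurable_id (measurable_fst.mul measurable_snd.abs)
  have hG' : IndepFun G (fun ω => |S ω|) P := hGS.comp measurable_id measurable_abs
  simp_rw [mul_left_comm (G _)]
  rw [hB'.integral_fun_mul_eq_mul_integral (by fun_prop) (by fun_prop),
    hG'.integral_fun_mul_eq_mul_integral (by fun_prop) (by fun_prop), hG0, zero_mul, mul_zero]

end

lemma two_div_pi_mul_sq_le_one {ε : ℝ} (hε : ε ∈ Icc (0 : ℝ) (1 / 2)) :
    2 / π * (1 - 2 * ε) ^ 2 ≤ 1 := by
  have hsq : (1 - 2 * ε) ^ 2 ≤ 1 := by nlinarith [hε.1, hε.2]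
  have hπ : 2 / π ≤ 1 := (div_le_one pi_pos).2 (by linarith [pi_gt_three])
  nlinarith [sq_nonneg (1 - 2 * ε), div_pos two_pos pi_pos]

lemma squared_loss_solution_identities {ε δ μ lam α : ℝ} (hε : ε ∈ Icc (0 : ℝ) (1 / 2))
    (hδ : 1 < δ) (hμ : μ = (1 - 2 * ε) * √(2 / π)) (hlam : lam = 1 / (2 * (δ - 1)))
    (hα : α = √((1 - 2 / π * (1 - 2 * ε) ^ 2) / (δ - 1))) :
    lam * δ * (2 / (1 + 2 * lam)) = 1 ∧ (δ - 1) * α ^ 2 = 1 - μ ^ 2 := by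
  have hδ1 : 0 < δ - 1 := sub_pos.2 hδ
  constructor
  · rw [hlam]; field_simp; ring
  · rw [hα, sq_sqrt (div_nonneg (sub_nonneg.2 (two_div_pi_mul_sq_le_one hε)) hδ1.le), hμ,
      mul_pow, sq_sqrt (by positivity)]
    field_simp

/-- For independent standard Gaussians `G, S` and
`Y = BSC_ε(sign S)` with `ε ∈ [0, 1/2]`, and for the squared loss
`ℓ(t) = (t-1)²` (so `ℓ'(t) = 2(t-1)` and `prox_ℓ(x; λ) = (x+2λ)/(1+2λ)`),
the system
`E[YS ℓ'(prox(αG+μSY;λ))] = 0`, `λ²δ E[ℓ'(prox(αG+μSY;λ))²] = α²`,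
`λδ E[G ℓ'(prox(αG+μSY;λ))] = α`
is, for `δ > 1`, solved by `μ = (1-2ε)√(2/π)`, `λ = 1/(2(δ-1))`,
`α = √((1 - (2/π)(1-2ε)²)/(δ-1))`. -/
theorem squared_loss_system_solution
    {Ω : Type*} [MeasurableSpace Ω] (P : Measure Ω) [IsProbabilityMeasure P]
    (G S B Y : Ω → ℝ) (hG : Measurable G) (hS : Measurable S) (hB : Measurable B)
    (hGlaw : Measure.map G P = gaussianReal 0 1)
    (hSlaw : Measure.map S P = gaussianReal 0 1)
    (hGS : IndepFun G S P)
    (hBind : IndepFun B (fun ω => (G ω, S ω)) P)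
    (ε : ℝ) (hε : ε ∈ Set.Icc (0 : ℝ) (1 / 2))
    (hBval : ∀ ω, B ω = 1 ∨ B ω = -1)
    (hBflip : P {ω | B ω = -1} = ENNReal.ofReal ε)
    (hY : ∀ ω, Y ω = B ω * Real.sign (S ω))
    (δ : ℝ) (hδ : 1 < δ)
    (μ lam α : ℝ)
    (hμ : μ = (1 - 2 * ε) * Real.sqrt (2 / Real.pi))
    (hlam : lam = 1 / (2 * (δ - 1)))
    (hα : α = Real.sqrt ((1 - (2 / Real.pi) * (1 - 2 * ε) ^ 2) / (δ - 1))) :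
    (∫ ω, Y ω * S ω *
        (2 * ((α * G ω + μ * S ω * Y ω + 2 * lam) / (1 + 2 * lam) - 1)) ∂P)
      = 0 ∧
    lam ^ 2 * δ *
      (∫ ω, (2 * ((α * G ω + μ * S ω * Y ω + 2 * lam) / (1 + 2 * lam) - 1)) ^ 2 ∂P)
      = α ^ 2 ∧
    lam * δ *
      (∫ ω, G ω *
        (2 * ((α * G ω + μ * S ω * Y ω + 2 * lam) / (1 + 2 * lam) - 1)) ∂P)
      = α := by
  have hG' : HasLaw G (gaussianReal 0 1) P := ⟨hG.aemeasurable, hGlaw⟩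
  have hS' : HasLaw S (gaussianReal 0 1) P := ⟨hS.aemeasurable, hSlaw⟩
  have hSY (ω : Ω) : S ω * Y ω = B ω * |S ω| := by rw [hY, mul_left_comm, mul_sign_self]
  have hBmean : ∫ ω, B ω ∂P = 1 - 2 * ε := by
    rw [integral_of_eq_one_or_neg_one hB hBval, measureReal_def, hBflip,
      ENNReal.toReal_ofReal hε.1]
  have hBS : IndepFun B S P := hBind.comp measurable_id measurable_snd
  have hZmean : ∫ ω, B ω * |S ω| ∂P = μ := by
    rw [integral_mul_abs_of_indepFun hB hBS hS', hBmean, hμ]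
  have hlam0 : 0 < lam := by rw [hlam, one_div_pos]; linarith
  set c : ℝ := 2 / (1 + 2 * lam) with hc
  have hprox (ω : Ω) : 2 * ((α * G ω + μ * S ω * Y ω + 2 * lam) / (1 + 2 * lam) - 1)
      = c * α * G ω + c * μ * (B ω * |S ω|) + -c := by
    rw [mul_assoc μ, hSY, hc]
    field_simp
    ring
  obtain ⟨hZW, hGW, hWW⟩ := integral_affine_moments hG'.hasGaussianLaw.memLp_two
    (memLp_mul_abs_of_eq_one_or_neg_one hS'.hasGaussianLaw.memLp_two hB hBval)
    hG'.integral_gaussianReal (by simpa using hG'.integral_sq_gaussianReal)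
    (by simpa [integral_sq_mul_abs_of_eq_one_or_neg_one hBval] using
      hS'.integral_sq_gaussianReal)
    (integral_mul_mul_abs_eq_zero hBind hGS hB hG hS hG'.integral_gaussianReal)
    (c * α) (c * μ) (-c)
  obtain ⟨hk, hα2⟩ := squared_loss_solution_identities hε hδ hμ hlam hα
  simp_rw [hprox, mul_comm (Y _) (S _), hSY]
  refine ⟨?_, ?_, ?_⟩
  · rw [hZW, hZmean]; ring
  · rw [hWW, hZmean]
    linear_combination (lam * δ * c + 1) * α ^ 2 * hk - lam ^ 2 * δ * c ^ 2 * hα2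
  · rw [hGW]; linear_combination α * hk
end
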